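/- arXiv:1204.2456 — 2 statements merged into one kernel-verified Lean document; each statement's English description precedes it below -/
import Mathlib

section
/- Let (R, m) be a commutative Noetherian local ring and M a finitely generated R-module which has a rank. If rank(M) equals μ(M), the minimal number of generators of M, then M is a free R-module. -/
noncomputable section

open IsLocalRing CategoryTheory TensorProduct

/-- The length of a module: supremum of lengths of strictly increasing chains of submodules. -/
noncomputable def mLength (R M : Type) [CommRing R] [AddCommGroup M] [Module R M] : ℕ∞ :=
  ⨆ (c : LTSeries (Submodule R M)), (c.length : ℕ∞)

/-- The depth of a module over a local ring: supremum of lengths of regular sequences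
contained in the maximal ideal. -/
noncomputable def mDepth (R : Type) [CommRing R] [IsLocalRing R]
    (M : Type) [AddCommGroup M] [Module R M] : ℕ∞ :=
  sSup {n : ℕ∞ | ∃ rs : List R, (rs.length : ℕ∞) = n ∧ (∀ r ∈ rs, r ∈ maximalIdeal R) ∧
    RingTheory.Sequence.IsRegular M rs}

/-- The (Krull) dimension of a module: the Krull dimension of `R ⧸ ann M`. -/
noncomputable def mDim (R : Type) [CommRing R] (M : Type) [AddCommGroup M] [Module R M] :
    WithBot ℕ∞ :=
  ringKrullDim (R ⧸ Module.annihilator R M)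

/-- A Cohen-Macaulay local ring: `depth R = dim R`. -/
def IsCMLocalRing (R : Type) [CommRing R] [IsLocalRing R] : Prop :=
  (mDepth R R : WithBot ℕ∞) = ringKrullDim R

/-- A maximal Cohen-Macaulay module: `depth M = dim R`. -/
def IsMCM (R : Type) [CommRing R] [IsLocalRing R] (M : Type) [AddCommGroup M] [Module R M] :
    Prop :=
  (mDepth R M : WithBot ℕ∞) = ringKrullDim R

/-- `M` has a rank: its localization at the set of nonzerodivisors is free. -/
def HasRank (R : Type) [CommRing R] (M : Type) [AddCommGroup M] [Module R M] : Prop :=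
  Module.Free (Localization (nonZeroDivisors R)) (LocalizedModule (nonZeroDivisors R) M)

/-- The rank of a module: the rank of its localization at the nonzerodivisors. -/
noncomputable def modRank (R : Type) [CommRing R] (M : Type) [AddCommGroup M] [Module R M] : ℕ :=
  Module.finrank (Localization (nonZeroDivisors R)) (LocalizedModule (nonZeroDivisors R) M)

/-- Minimal number of generators. -/
noncomputable def mu (R : Type) [CommRing R] (M : Type) [AddCommGroup M] [Module R M] : ℕ :=
  sInf {n | ∃ s : Finset M, s.card = n ∧ Submodule.span R (s : Set M) = ⊤}

/-- `x` is a (full) system of parameters for `R`. -/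
def IsSOP (R : Type) [CommRing R] [IsLocalRing R] {d : ℕ} (x : Fin d → R) : Prop :=
  ((d : ℕ∞) : WithBot ℕ∞) = ringKrullDim R ∧ (∀ i, x i ∈ maximalIdeal R) ∧
    IsFiniteLength R (R ⧸ Ideal.span (Set.range x))

/-- The Frobenius power `I^{[q]}` of an ideal. -/
def frobPow {R : Type} [CommRing R] (I : Ideal R) (q : ℕ) : Ideal R :=
  Ideal.span ((fun a => a ^ q) '' (I : Set R))

/-- The invariant `κ(R)`. -/
noncomputable def kappa (R : Type) [CommRing R] [IsLocalRing R] (p : ℕ) : ℕ :=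
  sInf {t : ℕ | ∃ (d : ℕ) (x : Fin d → R), IsSOP R x ∧
    frobPow (maximalIdeal R) (p ^ t) ≤ Ideal.span (Set.range x)}

/-- `R` viewed as an `R`-module via the `n`-th iterated Frobenius, i.e. `{}^{f^n}R`. -/
def FrobTwist (R : Type) (p n : ℕ) : Type := R

instance (R : Type) [CommRing R] (p n : ℕ) : CommRing (FrobTwist R p n) :=
  inferInstanceAs (CommRing R)

instance (R : Type) [CommRing R] (p n : ℕ) [ExpChar R p] : Algebra R (FrobTwist R p n) :=
  RingHom.toAlgebra (iterateFrobenius R p n)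

/-- The Peskine-Szpiro Frobenius functor `F^n(M) = M ⊗_R {}^{f^n}R`, with `R`-module
structure coming from the right-hand (untwisted) factor. -/
def FrobF (R : Type) [CommRing R] (p n : ℕ) [ExpChar R p]
    (M : Type) [AddCommGroup M] [Module R M] : Type :=
  FrobTwist R p n ⊗[R] M

instance (R : Type) [CommRing R] (p n : ℕ) [ExpChar R p]
    (M : Type) [AddCommGroup M] [Module R M] : AddCommGroup (FrobF R p n M) :=
  inferInstanceAs (AddCommGroup (FrobTwist R p n ⊗[R] M))

instance (R : Type) [CommRing R] (p n : ℕ) [ExpChar R p]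
    (M : Type) [AddCommGroup M] [Module R M] : Module R (FrobF R p n M) :=
  inferInstanceAs (Module (FrobTwist R p n) (FrobTwist R p n ⊗[R] M))

/-- `Tor_i^R(M, N)` as an object of `ModuleCat R`. -/
noncomputable def TorQ (R : Type) [CommRing R] (i : ℕ)
    (M : Type) [AddCommGroup M] [Module R M] (N : Type) [AddCommGroup N] [Module R N] :
    ModuleCat R :=
  ((Tor (ModuleCat R) i).obj (ModuleCat.of R M)).obj (ModuleCat.of R N)

/-- `Ext_R^i(M, N)` as an object of `ModuleCat R`. -/
noncomputable def ExtQ (R : Type) [CommRing R] (i : ℕ)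
    (M : Type) [AddCommGroup M] [Module R M] (N : Type) [AddCommGroup N] [Module R N] :
    ModuleCat R :=
  ((Ext R (ModuleCat R) i).obj (Opposite.op (ModuleCat.of R M))).obj (ModuleCat.of R N)

/-- `M` has finite projective dimension, characterized by eventual vanishing of `Ext`. -/
def HasFinProjDim (R : Type) [CommRing R] (M : Type) [AddCommGroup M] [Module R M] : Prop :=
  ∃ n : ℕ, ∀ (N : Type) [AddCommGroup N] [Module R N], Limits.IsZero (ExtQ R (n + 1) M N)

/-- `ω` is a canonical module of the local ring `R`:
`Ext^i(k, ω) = 0` for `i ≠ d = dim R` and `Ext^d(k, ω) ≅ k`. -/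
def IsCanonicalModule (R : Type) [CommRing R] [IsLocalRing R]
    (ω : Type) [AddCommGroup ω] [Module R ω] : Prop :=
  Module.Finite R ω ∧ ∃ d : ℕ, ((d : ℕ∞) : WithBot ℕ∞) = ringKrullDim R ∧
    (∀ i : ℕ, i ≠ d → Limits.IsZero (ExtQ R i (ResidueField R) ω)) ∧
    Nonempty ((ExtQ R d (ResidueField R) ω) ≅ ModuleCat.of R (ResidueField R))

/-- A Gorenstein local ring: `R` is a canonical module of itself. -/
def IsGorensteinLocalRing (R : Type) [CommRing R] [IsLocalRing R] : Prop :=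
  IsCanonicalModule R R

/-- A generically Gorenstein ring: the localization at every minimal prime is Gorenstein. -/
def IsGenericallyGorenstein (R : Type) [CommRing R] : Prop :=
  ∀ (P : Ideal R) [P.IsPrime], P ∈ minimalPrimes R →
    IsGorensteinLocalRing (Localization.AtPrime P)

/-! A minimal generating set gives a surjection `f : R^μ → M`. After inverting the
nonzerodivisors it becomes a surjection between free modules of the same rank `μ`, hence an
isomorphism (Orzech). Its kernel is therefore torsion, but it lies in the torsion-free module
`R^μ`, so `f` is already an isomorphism. -/

open scoped nonZeroDivisors

theorem exists_finset_card_eq_mu_span_eq_top (R : Type) [CommRing R] (M : Type) [AddCommGroup M]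
    [Module R M] [Module.Finite R M] :
    ∃ s : Finset M, s.card = mu R M ∧ Submodule.span R (s : Set M) = ⊤ := by
  obtain ⟨s, hs⟩ := Module.Finite.fg_top (R := R) (M := M)
  exact Nat.sInf_mem (s := {n | ∃ s : Finset M, s.card = n ∧ Submodule.span R (s : Set M) = ⊤})
    ⟨s.card, s, rfl, hs⟩

theorem Fintype.linearCombination_subtype_val_surjective {R M : Type*} [CommSemiring R]
    [AddCommMonoid M] [Module R M] {s : Finset M} (hs : Submodule.span R (s : Set M) = ⊤) :
    Function.Surjective (Fintype.linearCombination R (Subtype.val : s → M)) := by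
  rw [← LinearMap.range_eq_top, Fintype.range_linearCombination, Subtype.range_coe_subtype,
    Finset.setOfPred_mem, hs]

theorem LinearMap.injective_of_localizedModuleMap_injective {R M N : Type*} [CommSemiring R]
    [AddCommMonoid M] [Module R M] [AddCommMonoid N] [Module R N] {S : Submonoid R}
    (hM : ∀ s : S, IsSMulRegular M s) (f : M →ₗ[R] N)
    (hf : Function.Injective (LocalizedModule.map S f)) : Function.Injective f := by
  have hmk : Function.Injective (LocalizedModule.mkLinearMap S M) :=
    (IsLocalizedModule.injective_iff_isRegular S _).mpr hM
  refine Function.Injective.of_comp (f := LocalizedModule.mkLinearMap S N) ?_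
  convert hf.comp hmk using 1
  ext x
  simp

theorem LinearMap.injective_of_surjective_of_finrank_le_finrank_localizedModule
    {R F M : Type*} [CommRing R] [Nontrivial R]
    [AddCommGroup F] [Module R F] [Module.Free R F] [Module.Finite R F]
    [AddCommGroup M] [Module R M] [Module.Finite R M]
    [Module.Free (Localization R⁰) (LocalizedModule R⁰ M)]
    (f : F →ₗ[R] M) (hf : Function.Surjective f)
    (hrank : Module.finrank R F ≤ Module.finrank (Localization R⁰) (LocalizedModule R⁰ M)) :
    Function.Injective f := by
  have := Module.free_of_isLocalizedModule (Rₛ := Localization R⁰) R⁰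
    (LocalizedModule.mkLinearMap R⁰ F)
  rw [← Module.finrank_of_isLocalizedModule_of_free (Localization R⁰) R⁰
    (LocalizedModule.mkLinearMap R⁰ F)] at hrank
  have hfS := OrzechProperty.bijective_of_surjective_of_finrank_le _
    (LocalizedModule.map_surjective R⁰ f hf) hrank
  exact f.injective_of_localizedModuleMap_injective
    (fun c ↦ Module.Flat.isSMulRegular_of_nonZeroDivisors c.2) hfS.1

theorem stmt_0_general (R : Type) [CommRing R]
    (M : Type) [AddCommGroup M] [Module R M] [Module.Finite R M]
    (hrk : HasRank R M) (h : modRank R M = mu R M) :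
    Module.Free R M := by
  nontriviality R using Module.Free.of_subsingleton'
  have : Module.Free (Localization R⁰) (LocalizedModule R⁰ M) := hrk
  obtain ⟨s, hcard, hspan⟩ := exists_finset_card_eq_mu_span_eq_top R M
  set f := Fintype.linearCombination R (Subtype.val : s → M)
  have hf : Function.Surjective f := Fintype.linearCombination_subtype_val_surjective hspan
  have hrank : Module.finrank R (s → R) ≤ modRank R M := by simp [h, hcard]
  exact .of_equiv (LinearEquiv.ofBijective f
    ⟨f.injective_of_surjective_of_finrank_le_finrank_localizedModule hf hrank, hf⟩)

/-- Over a Noetherian local ring, a finitely generated module with a rank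
whose rank equals its minimal number of generators is free. -/
theorem stmt_0 (R : Type) [CommRing R] [IsNoetherianRing R] [IsLocalRing R]
    (M : Type) [AddCommGroup M] [Module R M] [Module.Finite R M]
    (hrk : HasRank R M) (h : modRank R M = mu R M) :
    Module.Free R M :=
  stmt_0_general R M hrk h

end
end

section
/- Let R be a Noetherian local ring and let x = x_1, ..., x_d be an R-regular sequence such that R/(x) has finite length. Then for any positive integers a_1, ..., a_d, ℓ(R/(x_1^{a_1}, ..., x_d^{a_d})) = a_1 ⋯ a_d · ℓ(R/(x_1, ..., x_d)). In particular, for any q, ℓ(R/(x_1^q, ..., x_d^q)) = q^d · ℓ(R/(x)). -/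
noncomputable section

open IsLocalRing CategoryTheory TensorProduct

/-!
Fix an index `i` and let `K` be the ideal generated by the powers `x_j ^ a_j`, `j ≠ i`. Regular
sequences in a Noetherian local ring may be permuted and raised to powers, so `x_i` is a
nonzerodivisor on `R/K`. The order of vanishing `t ↦ ℓ((R/K)/(t))` is additive on products with a
nonzerodivisor factor, hence `ℓ(R/(K, x_i^n)) = n · ℓ(R/(K, x_i))`. Raising the exponents from `1`
to `a_j` one index at a time gives the product formula.
-/

theorem mLength_eq_length {R M : Type} [CommRing R] [AddCommGroup M] [Module R M] :
    mLength R M = Module.length R M := by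
  apply WithBot.coe_injective
  rw [Module.coe_length, Order.krullDim_eq_iSup_length, mLength]

theorem Set.range_update_eq_insert {ι α : Type*} [DecidableEq ι] (f : ι → α) (i : ι) (a : α) :
    Set.range (Function.update f i a) = insert a (f '' {i}ᶜ) := by
  ext b
  constructor
  · rintro ⟨j, rfl⟩
    rcases eq_or_ne j i with rfl | hj
    · simp
    · exact Or.inr ⟨j, hj, (Function.update_of_ne hj a f).symm⟩
  · rintro (rfl | ⟨j, hj, rfl⟩)
    · exact ⟨i, Function.update_self i b f⟩
    · exact ⟨j, Function.update_of_ne hj _ f⟩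

theorem Ideal.span_range_update {ι R : Type*} [CommSemiring R] [DecidableEq ι] (f : ι → R)
    (i : ι) (r : R) :
    Ideal.span (Set.range (Function.update f i r)) = Ideal.span (f '' {i}ᶜ) ⊔ Ideal.span {r} := by
  rw [Set.range_update_eq_insert, Ideal.span_insert, sup_comm]

open Ideal in
theorem length_quotient_sup_span_pow {R : Type*} [CommRing R] (I : Ideal R) {r : R}
    (hr : IsSMulRegular (R ⧸ I) r) (n : ℕ) :
    Module.length R (R ⧸ I ⊔ span {r ^ n}) = n * Module.length R (R ⧸ I ⊔ span {r}) := by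
  have hord : ∀ s : R,
      Module.length R (R ⧸ I ⊔ span {s}) = Ring.ord (R ⧸ I) (Ideal.Quotient.mk I s) := by
    intro s
    have e := (DoubleQuot.quotQuotEquivQuotSupₐ R I (span {s})).toLinearEquiv
    rw [map_span, Set.image_singleton, Quotient.mkₐ_eq_mk] at e
    rw [Ring.ord, ← Module.length_eq_of_surjective (S := R) (R := R ⧸ I)
      Ideal.Quotient.mk_surjective, e.length_eq]
  have hreg : Ideal.Quotient.mk I r ∈ nonZeroDivisors (R ⧸ I) := by
    rw [← isRegular_iff_mem_nonZeroDivisors, ← isLeftRegular_iff_isRegular, isLeftRegular_iff]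
    exact (isSMulRegular_algebraMap_iff (R ⧸ I)).mpr hr
  rw [hord, hord, map_pow, Ring.ord_pow hreg, nsmul_eq_mul]

open RingTheory.Sequence IsLocalRing

section RegularSequence

variable {R M : Type*} [CommRing R] [IsLocalRing R] [AddCommGroup M] [Module R M]

theorem RingTheory.Sequence.IsRegular.mem_maximalIdeal {rs : List R} (h : IsRegular M rs) :
    ∀ r ∈ rs, r ∈ maximalIdeal R := fun r hr =>
  le_maximalIdeal (J := Ideal.ofList rs)
    (fun htop => h.top_ne_smul (by rw [htop, Submodule.top_smul]))
    (Ideal.subset_span (s := {r | r ∈ rs}) hr)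

variable [IsNoetherian R M]

theorem RingTheory.Sequence.IsWeaklyRegular.pow_cons {r : R} {rs : List R}
    (hr : r ∈ maximalIdeal R) (hrs : ∀ s ∈ rs, s ∈ maximalIdeal R)
    (h : IsWeaklyRegular M (r :: rs)) {n : ℕ} (hn : n ≠ 0) :
    IsWeaklyRegular M (r ^ n :: rs) := by
  have hmem : ∀ s ∈ r :: rs, s ∈ maximalIdeal R := List.forall_mem_cons.mpr ⟨hr, hrs⟩
  have hlast := isWeaklyRegular_of_perm_of_subset_maximalIdeal h
    (List.perm_append_singleton r rs).symm hmem
  rw [isWeaklyRegular_append_iff, isWeaklyRegular_singleton_iff] at hlast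
  refine isWeaklyRegular_of_perm_of_subset_maximalIdeal (rs := rs ++ [r ^ n]) ?_
    (List.perm_append_singleton _ _) ?_
  · rw [isWeaklyRegular_append_iff, isWeaklyRegular_singleton_iff]
    exact ⟨hlast.1, hlast.2.pow n⟩
  · simp only [List.mem_append, List.mem_singleton]
    rintro s (hs | rfl)
    exacts [hrs s hs, Ideal.pow_mem_of_mem _ hr n (Nat.pos_of_ne_zero hn)]

theorem isWeaklyRegular_ofFn_pow {d : ℕ} {x : Fin d → R} (hx : ∀ j, x j ∈ maximalIdeal R)
    (h : IsWeaklyRegular M (List.ofFn x)) {n : Fin d → ℕ} (hn : ∀ j, n j ≠ 0) :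
    IsWeaklyRegular M (List.ofFn fun j => x j ^ n j) := by
  induction d generalizing M with
  | zero => simp
  | succ d ih =>
    have htail : ∀ s ∈ List.ofFn (fun j => x j.succ), s ∈ maximalIdeal R := by
      simpa [List.mem_ofFn] using fun j => hx (Fin.succ j)
    rw [List.ofFn_succ] at h ⊢
    obtain ⟨hhead, htail_reg⟩ :=
      (isWeaklyRegular_cons_iff M _ _).mp (h.pow_cons (hx 0) htail (hn 0))
    exact (isWeaklyRegular_cons_iff M _ _).mpr
      ⟨hhead, ih (fun j => hx j.succ) htail_reg (fun j => hn j.succ)⟩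

theorem isSMulRegular_quotient_span_image_compl {d : ℕ} {x : Fin d → R}
    (hx : ∀ j, x j ∈ maximalIdeal R) (h : IsWeaklyRegular M (List.ofFn x)) (i : Fin d) :
    IsSMulRegular (M ⧸ (Ideal.span (x '' {i}ᶜ) • ⊤ : Submodule R M)) (x i) := by
  set L := ((List.finRange d).filter (· != i)).map x
  have hperm : (List.ofFn x).Perm (L ++ [x i]) := by
    rw [List.ofFn_eq_map]
    have h1 := List.perm_cons_erase (List.mem_finRange i)
    rw [(List.nodup_finRange d).erase_eq_filter i] at h1
    exact (h1.map x).trans (List.perm_append_singleton _ _).symm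
  have hL : Ideal.ofList L = Ideal.span (x '' {i}ᶜ) := by
    refine congrArg Ideal.span (Set.ext fun s => ?_)
    simp [L]
  have hlast := isWeaklyRegular_of_perm_of_subset_maximalIdeal h hperm
    (by simpa [List.mem_ofFn] using hx)
  rw [isWeaklyRegular_append_iff, isWeaklyRegular_singleton_iff, hL] at hlast
  exact hlast.2

end RegularSequence

section Length

variable {R : Type*} [CommRing R] [IsLocalRing R] [IsNoetherianRing R]

theorem length_quotient_span_range_update_pow {d : ℕ} {y : Fin d → R}
    (hy : ∀ j, y j ∈ maximalIdeal R) (h : IsWeaklyRegular R (List.ofFn y)) (i : Fin d) (n : ℕ) :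
    Module.length R (R ⧸ Ideal.span (Set.range (Function.update y i (y i ^ n)))) =
      n * Module.length R (R ⧸ Ideal.span (Set.range y)) := by
  have hreg := isSMulRegular_quotient_span_image_compl hy h i
  rw [Ideal.smul_eq_mul, Ideal.mul_top] at hreg
  conv_rhs => rw [← Function.update_eq_self i y]
  rw [Ideal.span_range_update, Ideal.span_range_update, length_quotient_sup_span_pow _ hreg]

theorem length_quotient_span_pow_eq_prod_mul {d : ℕ} {x : Fin d → R}
    (hx : ∀ j, x j ∈ maximalIdeal R) (h : IsWeaklyRegular R (List.ofFn x)) {a : Fin d → ℕ}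
    (ha : ∀ j, a j ≠ 0) :
    Module.length R (R ⧸ Ideal.span (Set.range fun j => x j ^ a j)) =
      (∏ j, (a j : ℕ∞)) * Module.length R (R ⧸ Ideal.span (Set.range x)) := by
  classical
  suffices ∀ s : Finset (Fin d),
      Module.length R (R ⧸ Ideal.span (Set.range fun j => x j ^ s.piecewise a 1 j)) =
        (∏ j ∈ s, (a j : ℕ∞)) * Module.length R (R ⧸ Ideal.span (Set.range x)) by
    have h_univ := this Finset.univ
    rwa [Finset.piecewise_univ] at h_univ
  intro s
  induction s using Finset.induction_on with
  | empty =>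
    have hx1 : (fun j => x j ^ (∅ : Finset (Fin d)).piecewise a 1 j) = x := funext fun j => by simp
    rw [hx1, Finset.prod_empty, one_mul]
  | insert i s hi ih =>
    set y := fun j => x j ^ s.piecewise a 1 j
    have hyi : y i = x i := by simp [y, Finset.piecewise_eq_of_notMem _ _ _ hi]
    have hb : ∀ j, s.piecewise a 1 j ≠ 0 := fun j => by
      by_cases hj : j ∈ s <;> simp [hj, ha j]
    have hy : ∀ j, y j ∈ maximalIdeal R := fun j =>
      Ideal.pow_mem_of_mem _ (hx j) _ (Nat.pos_of_ne_zero (hb j))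
    have hupdate : (fun j => x j ^ (insert i s).piecewise a 1 j) =
        Function.update y i (y i ^ a i) := by
      rw [Finset.piecewise_insert, hyi]
      exact funext fun j => Function.apply_update (fun j e => x j ^ e) _ i (a i) j
    rw [hupdate, length_quotient_span_range_update_pow hy (isWeaklyRegular_ofFn_pow hx h hb),
      ih, Finset.prod_insert hi, mul_assoc]

end Length

theorem stmt_16_general (R : Type) [CommRing R] [IsNoetherianRing R] [IsLocalRing R]
    (d : ℕ) (x : Fin d → R)
    (hreg : RingTheory.Sequence.IsRegular R (List.ofFn x)) :
    (∀ a : Fin d → ℕ, (∀ j, 0 < a j) →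
        mLength R (R ⧸ Ideal.span (Set.range fun j => x j ^ a j)) =
          (∏ j, ((a j : ℕ∞))) * mLength R (R ⧸ Ideal.span (Set.range x))) ∧
      ∀ q : ℕ, 0 < q →
        mLength R (R ⧸ Ideal.span (Set.range fun j => x j ^ q)) =
          ((q : ℕ∞)) ^ d * mLength R (R ⧸ Ideal.span (Set.range x)) := by
  have hx : ∀ j, x j ∈ maximalIdeal R := fun j =>
    hreg.mem_maximalIdeal _ (List.mem_ofFn.mpr ⟨j, rfl⟩)
  have hprod : ∀ a : Fin d → ℕ, (∀ j, 0 < a j) →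
      mLength R (R ⧸ Ideal.span (Set.range fun j => x j ^ a j)) =
        (∏ j, ((a j : ℕ∞))) * mLength R (R ⧸ Ideal.span (Set.range x)) := fun a ha => by
    simpa only [mLength_eq_length] using
      length_quotient_span_pow_eq_prod_mul hx hreg.toIsWeaklyRegular fun j => (ha j).ne'
  refine ⟨hprod, fun q hq => ?_⟩
  simpa using hprod (fun _ => q) fun _ => hq

/-- If `x = x_1, …, x_d` is an `R`-regular sequence with `ℓ(R/(x)) < ∞`,
then `ℓ(R/(x_1^{a_1}, …, x_d^{a_d})) = a_1 ⋯ a_d · ℓ(R/(x))` for all positive integers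
`a_1, …, a_d`; in particular `ℓ(R/(x_1^q, …, x_d^q)) = q^d · ℓ(R/(x))` for any `q > 0`. -/
theorem stmt_16 (R : Type) [CommRing R] [IsNoetherianRing R] [IsLocalRing R]
    (d : ℕ) (x : Fin d → R)
    (hreg : RingTheory.Sequence.IsRegular R (List.ofFn x))
    (hfl : IsFiniteLength R (R ⧸ Ideal.span (Set.range x))) :
    (∀ a : Fin d → ℕ, (∀ j, 0 < a j) →
        mLength R (R ⧸ Ideal.span (Set.range fun j => x j ^ a j)) =
          (∏ j, ((a j : ℕ∞))) * mLength R (R ⧸ Ideal.span (Set.range x))) ∧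
      ∀ q : ℕ, 0 < q →
        mLength R (R ⧸ Ideal.span (Set.range fun j => x j ^ q)) =
          ((q : ℕ∞)) ^ d * mLength R (R ⧸ Ideal.span (Set.range x)) :=
  stmt_16_general R d x hreg

end
end
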